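/- Invariance of the measure under the third-iterate Collatz map: let T : ℕ → ℕ be the Collatz map and S = T∘T∘T its third iterate. For every integer m ≥ 1 and every j with 0 ≤ j < 8^m, the μ_(m+1)-measure of the preimage S⁻¹(B(j,8^m)) equals the μ_(m+1)-measure of B(j,8^m); both equal ν(j)/8^(m-1). That is, ∑_{n : S(n) ≡ j (mod 8^m)} μ_(m+1)(n) = ∑_{n : n ≡ j (mod 8^m)} μ_(m+1)(n) = (1/6)·(1/8)^(m-1) if j is even and (1/12)·(1/8)^(m-1) if j is odd. -/

import Mathlib

/-!
Both sums collapse to finite sums over residues modulo `8 ^ (m + 1)`: `μ_(m+1)(n)` is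
`(1/2)^(⌊n / 8^(m+1)⌋ + 1) (1/8)^m` times a function of `n mod 8^(m+1)`, and so is the condition
`S n ≡ j (mod 8^m)`, because `T^[k] (n + 2^k q) = T^[k] n + 6^e q` where `e` counts the odd terms
among `n, T n, …, T^[k-1] n`. The residues `r ≡ j (mod 8^m)` are `8` in number and share the
parity of `j`. For the preimage, write `r = s + 8 q` with `s < 8`: as `q` runs modulo `8^m`,
`S s + 6^e q` hits each class `≡ S s (mod 2^e)` exactly `2^e` times, and weighting these counts by
`ν(s)` over the eight residues `s` gives `8 ν(j)`.
-/

/-- The Collatz map. -/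
def collatzT (n : ℕ) : ℕ := if n % 2 = 0 then n / 2 else 3 * n + 1

/-- Third iterate of the Collatz map. -/
def collatzS (n : ℕ) : ℕ := collatzT^[3] n

/-- The weight ν: 1/6 on even integers, 1/12 on odd integers. -/
noncomputable def nuWeight (n : ℕ) : ℝ := if n % 2 = 0 then 1 / 6 else 1 / 12

/-- The measure μ_m of the singleton {n}. -/
noncomputable def muMeas (m n : ℕ) : ℝ :=
  (1 / 2 : ℝ) ^ (n / 8 ^ m + 1) * (1 / 8 : ℝ) ^ (m - 1) * nuWeight n

open Finset

def collatzOddSteps (k n : ℕ) : ℕ := ∑ i ∈ range k, collatzT^[i] n % 2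

lemma collatzT_add_two_mul (n c : ℕ) : collatzT (n + 2 * c) = collatzT n + 6 ^ (n % 2) * c := by
  unfold collatzT
  rw [Nat.add_mul_mod_self_left]
  split_ifs with h
  · rw [h, pow_zero, one_mul]; omega
  · rw [Nat.mod_two_ne_zero.1 h, pow_one]; ring

lemma collatzT_iterate_add_two_pow_mul (k n q : ℕ) :
    collatzT^[k] (n + 2 ^ k * q) = collatzT^[k] n + 6 ^ collatzOddSteps k n * q := by
  induction k generalizing n q with
  | zero => simp [collatzOddSteps]
  | succ k ih =>
    rw [Function.iterate_succ_apply, Function.iterate_succ_apply, pow_succ', mul_assoc,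
      collatzT_add_two_mul, mul_left_comm, ih, collatzOddSteps, collatzOddSteps, sum_range_succ',
      Function.iterate_zero_apply, pow_add, mul_assoc]
    simp only [Function.iterate_succ_apply]

lemma collatzOddSteps_le (k n : ℕ) : collatzOddSteps k n ≤ k := by
  simpa [collatzOddSteps] using
    sum_le_sum fun i (_ : i ∈ range k) => Nat.le_of_lt_succ (Nat.mod_lt (collatzT^[i] n) two_pos)

lemma collatzS_add_eight_mul (n q : ℕ) :
    collatzS (n + 8 * q) = collatzS n + 6 ^ collatzOddSteps 3 n * q :=
  collatzT_iterate_add_two_pow_mul 3 n q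

lemma collatzS_mod_eight_mul_mod (N n : ℕ) : collatzS (n % (8 * N)) % N = collatzS n % N := by
  conv_rhs => rw [← Nat.mod_add_div n (8 * N), mul_assoc, collatzS_add_eight_mul,
    mul_left_comm, Nat.add_mul_mod_self_left]

lemma two_dvd_eight_pow {k : ℕ} (hk : k ≠ 0) : 2 ∣ 8 ^ k :=
  (Nat.dvd_of_mod_eq_zero rfl : 2 ∣ 8).trans (dvd_pow_self 8 hk)

lemma nuWeight_eq_of_modEq_two {a b : ℕ} (h : a ≡ b [MOD 2]) : nuWeight a = nuWeight b := by
  unfold nuWeight; rw [h]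

lemma nuWeight_mod_of_two_dvd {N : ℕ} (hN : 2 ∣ N) (n : ℕ) : nuWeight (n % N) = nuWeight n :=
  nuWeight_eq_of_modEq_two (Nat.mod_mod_of_dvd n hN)

lemma Finset.sum_range_mul_eq_sum_sum {M : Type*} [AddCommMonoid M] (f : ℕ → M) (a b : ℕ) :
    ∑ r ∈ range (a * b), f r = ∑ s ∈ range b, ∑ q ∈ range a, f (s + b * q) := by
  induction a with
  | zero => simp
  | succ a ih =>
    simp only [add_mul, one_mul, sum_range_add, ih, sum_range_succ _ a, sum_add_distrib]
    simp only [add_comm, mul_comm]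

lemma exists_add_mul_modEq_iff_modEq_of_coprime {d M w b j : ℕ} [NeZero M] (hd : 0 < d)
    (hw : w.Coprime M) (hbj : b ≡ j [MOD d]) : ∃ q₀, ∀ q, b + d * w * q ≡ j [MOD d * M] ↔ q ≡ q₀ [MOD M] := by
  obtain ⟨e, he⟩ := Nat.modEq_iff_dvd.1 hbj
  let u := ZMod.unitOfCoprime w hw
  refine ⟨(((u⁻¹ : (ZMod M)ˣ) : ZMod M) * e).val, fun q => ?_⟩
  rw [Nat.modEq_iff_dvd, ← ZMod.natCast_eq_natCast_iff, ZMod.natCast_zmod_val,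
    Units.eq_inv_mul_iff_mul_eq, ZMod.coe_unitOfCoprime]
  have : (j : ℤ) - (b + d * w * q : ℕ) = d * (e - w * q) := by push_cast; linarith
  rw [this, Nat.cast_mul, mul_dvd_mul_iff_left (by positivity),
    ← ZMod.intCast_zmod_eq_zero_iff_dvd]
  push_cast
  rw [sub_eq_zero, eq_comm]

lemma card_filter_add_mul_mod_eq {d M w b j : ℕ} (hw : w.Coprime M) (hj : j < d * M) :
    #{q ∈ range (d * M) | (b + d * w * q) % (d * M) = j} = if j % d = b % d then d else 0 := by
  have hd : 0 < d := Nat.pos_of_mul_pos_right (j.zero_le.trans_lt hj)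
  have hM : 0 < M := Nat.pos_of_mul_pos_left (j.zero_le.trans_lt hj)
  have : NeZero M := ⟨hM.ne'⟩
  split_ifs with h
  · obtain ⟨q₀, hq₀⟩ := exists_add_mul_modEq_iff_modEq_of_coprime hd hw h.symm
    calc #{q ∈ range (d * M) | (b + d * w * q) % (d * M) = j}
        = #{q ∈ range (d * M) | q ≡ q₀ [MOD M]} := by
          refine congrArg _ (filter_congr fun q _ => ?_)
          rw [← hq₀ q, Nat.ModEq, Nat.mod_eq_of_lt hj]
      _ = d := by
          rw [← Nat.count_eq_card_filter_range, Nat.count_modEq_card _ hM]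
          simp [hM.ne']
  · rw [card_eq_zero, filter_eq_empty_iff]
    intro q _ hq
    apply h
    rw [← hq, Nat.mod_mod_of_dvd _ (dvd_mul_right d M), mul_assoc, Nat.add_mul_mod_self_left]

lemma card_filter_collatzS_add_eight_mul_mod_eq {m j : ℕ} (s : ℕ) (hm : 1 ≤ m) (hj : j < 8 ^ m) :
    #{q ∈ range (8 ^ m) | collatzS (s + 8 * q) % 8 ^ m = j} =
      if j % 2 ^ collatzOddSteps 3 s = collatzS s % 2 ^ collatzOddSteps 3 s then
        2 ^ collatzOddSteps 3 s else 0 := by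
  simp_rw [collatzS_add_eight_mul]
  have he := collatzOddSteps_le 3 s
  generalize collatzOddSteps 3 s = e at *
  have h8 : 8 ^ m = 2 ^ e * 2 ^ (3 * m - e) := by
    rw [← pow_add, Nat.add_sub_cancel' (by omega), pow_mul]
    rfl
  simp_rw [show 6 ^ e = 2 ^ e * 3 ^ e from mul_pow 2 3 e]
  rw [h8] at hj ⊢
  exact card_filter_add_mul_mod_eq (Nat.Coprime.pow _ _ (by norm_num)) hj

lemma sum_ite_mod_eq_nuWeight {m j : ℕ} (hm : 1 ≤ m) (hj : j < 8 ^ m) :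
    ∑ r ∈ range (8 ^ (m + 1)), (if r % 8 ^ m = j then nuWeight r else 0) = 8 * nuWeight j := by
  have hcard : #{r ∈ range (8 ^ (m + 1)) | r % 8 ^ m = j} = 8 := by
    rw [filter_congr (q := (· ≡ j [MOD 8 ^ m])) fun r _ => by rw [Nat.ModEq, Nat.mod_eq_of_lt hj],
      ← Nat.count_eq_card_filter_range, Nat.count_modEq_card _ (by positivity)]
    simp [pow_succ]
  rw [← sum_filter, sum_congr rfl (g := fun _ => nuWeight j) fun r hr => ?_, sum_const, hcard,
    nsmul_eq_mul, Nat.cast_ofNat]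
  rw [← (mem_filter.1 hr).2, nuWeight_mod_of_two_dvd (two_dvd_eight_pow (by omega))]

-- `(S s, collatzOddSteps 3 s)` for `s = 0, …, 7` is
-- `(0, 0), (1, 1), (2, 1), (16, 2), (4, 1), (4, 1), (5, 1), (34, 2)`.
lemma sum_range_eight_ite_smul_nuWeight (j : ℕ) :
    ∑ s ∈ range 8, (if j % 2 ^ collatzOddSteps 3 s = collatzS s % 2 ^ collatzOddSteps 3 s then
      2 ^ collatzOddSteps 3 s else 0) • nuWeight s = 8 * nuWeight j := by
  have hj2 : j % 2 = j % 4 % 2 := (Nat.mod_mod_of_dvd j (by norm_num)).symm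
  have hj4 : j % 4 < 4 := Nat.mod_lt _ (by norm_num)
  interval_cases h : j % 4 <;>
    norm_num [sum_range_succ, collatzOddSteps, collatzS, collatzT, nuWeight, hj2, h, Nat.mod_one]

lemma sum_ite_collatzS_mod_eq_nuWeight {m j : ℕ} (hm : 1 ≤ m) (hj : j < 8 ^ m) :
    ∑ r ∈ range (8 ^ (m + 1)), (if collatzS r % 8 ^ m = j then nuWeight r else 0) =
      8 * nuWeight j := by
  have hfiber : ∀ s, ∑ q ∈ range (8 ^ m),
      (if collatzS (s + 8 * q) % 8 ^ m = j then nuWeight (s + 8 * q) else 0) =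
        #{q ∈ range (8 ^ m) | collatzS (s + 8 * q) % 8 ^ m = j} • nuWeight s := by
    intro s
    rw [← sum_filter, ← sum_const]
    exact sum_congr rfl fun q _ => nuWeight_eq_of_modEq_two (by rw [Nat.ModEq]; omega)
  simp_rw [pow_succ, sum_range_mul_eq_sum_sum, hfiber,
    card_filter_collatzS_add_eight_mul_mod_eq _ hm hj, sum_range_eight_ite_smul_nuWeight]

lemma tsum_mul_div_mod (Q : ℕ) [NeZero Q] (f g : ℕ → ℝ) (hf : Summable fun k => ‖f k‖) :
    ∑' n, f (n / Q) * g (n % Q) = (∑' k, f k) * ∑ r ∈ range Q, g r := by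
  rw [← (Nat.divModEquiv Q).symm.tsum_eq, ← Fin.sum_univ_eq_sum_range,
    ← tsum_fintype (L := .unconditional _),
    tsum_mul_tsum_of_summable_norm hf (Summable.of_finite (f := fun r : Fin Q => ‖g r‖))]
  congr! 2 with ⟨k, r⟩
  all_goals simp [Nat.divModEquiv, add_comm, Nat.add_mul_div_right, NeZero.pos,
    Nat.div_eq_of_lt r.2, Nat.mod_eq_of_lt r.2]

lemma tsum_ite_muMeas (m : ℕ) (P : ℕ → Prop) [DecidablePred P]
    (hP : ∀ n, P (n % 8 ^ (m + 1)) ↔ P n) :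
    ∑' n, (if P n then muMeas (m + 1) n else 0) =
      (1 / 8) ^ m * ∑ r ∈ range (8 ^ (m + 1)), if P r then nuWeight r else 0 := by
  let g : ℕ → ℝ := fun r => 1 / 2 * (1 / 8) ^ m * if P r then nuWeight r else 0
  have hterm : ∀ n, (if P n then muMeas (m + 1) n else 0) =
      (1 / 2 : ℝ) ^ (n / 8 ^ (m + 1)) * g (n % 8 ^ (m + 1)) := by
    intro n
    simp only [g, hP, nuWeight_mod_of_two_dvd (two_dvd_eight_pow m.succ_ne_zero), muMeas, Nat.add_sub_cancel]
    split_ifs <;> ring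
  rw [tsum_congr hterm, tsum_mul_div_mod _ (fun k => (1 / 2 : ℝ) ^ k) g
    (by simpa using summable_geometric_two), tsum_geometric_two, ← mul_sum]
  ring

theorem stmt_9 :
    ∀ m : ℕ, 1 ≤ m → ∀ j : ℕ, j < 8 ^ m →
      (∑' n : ℕ, (if collatzS n % 8 ^ m = j then muMeas (m + 1) n else 0)) =
          nuWeight j * (1 / 8 : ℝ) ^ (m - 1) ∧
      (∑' n : ℕ, (if n % 8 ^ m = j then muMeas (m + 1) n else 0)) =
          nuWeight j * (1 / 8 : ℝ) ^ (m - 1) := by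
  intro m hm j hj
  have hscale : (1 / 8 : ℝ) ^ m * (8 * nuWeight j) = nuWeight j * (1 / 8) ^ (m - 1) := by
    obtain ⟨k, rfl⟩ := Nat.exists_eq_add_of_le' hm
    rw [Nat.add_sub_cancel, pow_succ]
    ring
  have h8 : 8 ^ m ∣ 8 ^ (m + 1) := pow_dvd_pow 8 m.le_succ
  refine ⟨?_, ?_⟩
  · rw [tsum_ite_muMeas m _ fun n => by rw [pow_succ', collatzS_mod_eight_mul_mod],
      sum_ite_collatzS_mod_eq_nuWeight hm hj, hscale]
  · rw [tsum_ite_muMeas m _ fun n => by rw [Nat.mod_mod_of_dvd n h8],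
      sum_ite_mod_eq_nuWeight hm hj, hscale]
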